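/- arXiv:2406.08776 — 2 statements merged into one kernel-verified Lean document; each statement's English description precedes it below -/
import Mathlib

section
/- Let P ∈ ℝ^{n×n} and W ∈ ℝ^{n×p} with joint subspace M = C(P) ∩ C(W) and individual subspaces R¹ = C(P_{M⊥}P), R² = C(P_{M⊥}W), all assumed nonzero with dimensions r_M, r₁, r₂. Then there exist matrices M ∈ O_{n,r_M}, R⁽¹⁾ ∈ O_{n,r₁}, R⁽²⁾ ∈ O_{n,r₂} with orthonormal columns spanning these subspaces, and full-rank matrices Γ⁽¹⁾ ∈ ℝ^{(r_M+r₁)×n}, Γ⁽²⁾ ∈ ℝ^{(r_M+r₂)×p}, such that P = (M R⁽¹⁾)Γ⁽¹⁾, W = (M R⁽²⁾)Γ⁽²⁾, and MᵀR⁽ᵏ⁾ = 0 for k = 1,2. -/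
/-! Let `M` have orthonormal columns spanning `𝓜 = C(P) ∩ C(W)`, and for `A ∈ {P, W}` let `R` have
orthonormal columns spanning the image of `C(A)` under the projection onto `𝓜ᗮ`. That image lies
in `𝓜ᗮ`, so `Q = [M R]` has orthonormal columns; and since every vector is the sum of its
projections onto `𝓜` and `𝓜ᗮ`, `C(A) ≤ C(Q)`, whence `A = Q (Qᵀ A)`. Thus `Γ = Qᵀ A` has the
rank of `A`, which is `r_M + r` by rank–nullity for the projection onto `𝓜ᗮ` restricted to
`C(A) ≥ 𝓜`. -/

open Matrix

/-- The column space of a matrix, as a submodule of Euclidean space. -/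
noncomputable def colSpaceE {n : ℕ} {q : Type*} [Fintype q] [DecidableEq q]
    (A : Matrix (Fin n) q ℝ) : Submodule ℝ (EuclideanSpace ℝ (Fin n)) :=
  LinearMap.range (Matrix.toEuclideanLin A)

/-- The matrix of the orthogonal projection onto a subspace `K` of Euclidean space. -/
noncomputable def projMat {n : ℕ} (K : Submodule ℝ (EuclideanSpace ℝ (Fin n))) :
    Matrix (Fin n) (Fin n) ℝ :=
  Matrix.toEuclideanLin.symm ((K.subtypeL.comp K.orthogonalProjectionOnto).toLinearMap)

open Module

namespace Submodule

variable {𝕜 E : Type*} [RCLike 𝕜] [NormedAddCommGroup E] [InnerProductSpace 𝕜 E]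
  (K : Submodule 𝕜 E) [K.HasOrthogonalProjection]

lemma le_sup_map_starProjection_orthogonal (U : Submodule 𝕜 E) :
    U ≤ K ⊔ U.map (Kᗮ.starProjection : E →ₗ[𝕜] E) := by
  intro u hu
  rw [← K.starProjection_add_starProjection_orthogonal u]
  exact add_mem_sup (K.starProjection_apply_mem u) (mem_map_of_mem hu)

lemma map_starProjection_orthogonal_le (U : Submodule 𝕜 E) :
    U.map (Kᗮ.starProjection : E →ₗ[𝕜] E) ≤ Kᗮ :=
  map_le_iff_le_comap.mpr fun u _ ↦ Kᗮ.starProjection_apply_mem u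

lemma finrank_eq_finrank_add_finrank_map_starProjection_orthogonal [FiniteDimensional 𝕜 E]
    {U : Submodule 𝕜 E} (hKU : K ≤ U) :
    finrank 𝕜 U = finrank 𝕜 K + finrank 𝕜 (U.map (Kᗮ.starProjection : E →ₗ[𝕜] E)) := by
  set f := (Kᗮ.starProjection : E →ₗ[𝕜] E) ∘ₗ U.subtype
  have hrange : LinearMap.range f = U.map (Kᗮ.starProjection : E →ₗ[𝕜] E) := by
    rw [LinearMap.range_comp, range_subtype]
  have hker : LinearMap.ker f = K.comap U.subtype := by
    rw [LinearMap.ker_comp, ker_starProjection, orthogonal_orthogonal]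
  rw [← LinearMap.finrank_range_add_finrank_ker f, hrange, hker,
    (comapSubtypeEquivOfLe hKU).finrank_eq, add_comm]

end Submodule

namespace Matrix

variable {n : ℕ} {q q' : Type*} [Fintype q] [DecidableEq q] [Fintype q'] [DecidableEq q']

lemma rank_eq_finrank_colSpaceE (A : Matrix (Fin n) q ℝ) : A.rank = finrank ℝ (colSpaceE A) :=
  rank_eq_finrank_range_toLin A (EuclideanSpace.basisFun _ ℝ).toBasis
    (EuclideanSpace.basisFun _ ℝ).toBasis

lemma colSpaceE_projMat_mul (K : Submodule ℝ (EuclideanSpace ℝ (Fin n)))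
    (A : Matrix (Fin n) q ℝ) :
    colSpaceE (projMat K * A) = (colSpaceE A).map (K.starProjection : _ →ₗ[ℝ] _) := by
  rw [colSpaceE, colSpaceE, toLpLin_mul (q := 2), LinearMap.range_comp, projMat,
    LinearEquiv.apply_symm_apply]
  rfl

lemma toEuclideanLin_transpose (A : Matrix (Fin n) q ℝ) :
    toEuclideanLin Aᵀ = (toEuclideanLin A).adjoint := by
  rw [← conjTranspose_eq_transpose_of_trivial]
  exact toEuclideanLin_conjTranspose_eq_adjoint A

lemma transpose_mul_eq_zero_of_colSpaceE_le_orthogonal {A : Matrix (Fin n) q ℝ}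
    {B : Matrix (Fin n) q' ℝ} (h : colSpaceE B ≤ (colSpaceE A)ᗮ) : Aᵀ * B = 0 := by
  apply toEuclideanLin.injective
  ext1 x
  apply ext_inner_right ℝ
  intro y
  rw [toLpLin_mul (q := 2), LinearMap.comp_apply, toEuclideanLin_transpose,
    LinearMap.adjoint_inner_left, map_zero, LinearMap.zero_apply, inner_zero_left]
  exact Submodule.inner_left_of_mem_orthogonal (LinearMap.mem_range_self _ y)
    (h (LinearMap.mem_range_self _ x))

lemma transpose_toEuclideanLin_symm_mul_self
    (L : EuclideanSpace ℝ q →ₗᵢ[ℝ] EuclideanSpace ℝ (Fin n)) :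
    (toEuclideanLin.symm L.toLinearMap)ᵀ * toEuclideanLin.symm L.toLinearMap = 1 := by
  apply toEuclideanLin.injective
  rw [toLpLin_mul (q := 2), toEuclideanLin_transpose, LinearEquiv.apply_symm_apply,
    LinearIsometry.adjoint_comp_self', toLpLin_one]

lemma exists_transpose_mul_self_eq_one_and_colSpaceE_eq {r : ℕ}
    (K : Submodule ℝ (EuclideanSpace ℝ (Fin n))) (hK : finrank ℝ K = r) :
    ∃ A : Matrix (Fin n) (Fin r) ℝ, Aᵀ * A = 1 ∧ colSpaceE A = K := by
  let b : OrthonormalBasis (Fin r) ℝ K := (stdOrthonormalBasis ℝ K).reindex (finCongr hK)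
  let L := K.subtypeₗᵢ.comp b.repr.symm.toLinearIsometry
  refine ⟨toEuclideanLin.symm L.toLinearMap, transpose_toEuclideanLin_symm_mul_self L, ?_⟩
  rw [colSpaceE, LinearEquiv.apply_symm_apply]
  exact (LinearMap.range_comp_of_range_eq_top _ b.repr.symm.toLinearEquiv.range).trans
    K.range_subtype

lemma fromCols_transpose_mul_fromCols_eq_one {m r s R : Type*} [Fintype m] [DecidableEq r]
    [DecidableEq s] [CommRing R] {A : Matrix m r R} {B : Matrix m s R} (hA : Aᵀ * A = 1)
    (hB : Bᵀ * B = 1) (hAB : Aᵀ * B = 0) : (fromCols A B)ᵀ * fromCols A B = 1 := by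
  have hBA : Bᵀ * A = 0 := by
    rw [← transpose_transpose (Bᵀ * A), transpose_mul, transpose_transpose, hAB, transpose_zero]
  rw [transpose_fromCols, fromRows_mul_fromCols, hA, hB, hAB, hBA, fromBlocks_one]

lemma colSpaceE_fromCols (A : Matrix (Fin n) q ℝ) (B : Matrix (Fin n) q' ℝ) :
    colSpaceE (fromCols A B) = colSpaceE A ⊔ colSpaceE B := by
  apply le_antisymm
  · rintro _ ⟨x, rfl⟩
    have hsplit : toEuclideanLin (fromCols A B) x =
        toEuclideanLin A (WithLp.toLp 2 (x.ofLp ∘ Sum.inl)) +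
          toEuclideanLin B (WithLp.toLp 2 (x.ofLp ∘ Sum.inr)) := by
      simp only [toLpLin_apply, fromCols_mulVec, WithLp.toLp_add]
    rw [hsplit]
    exact Submodule.add_mem_sup (LinearMap.mem_range_self _ _) (LinearMap.mem_range_self _ _)
  · refine sup_le ?_ ?_ <;> rintro _ ⟨x, rfl⟩
    · refine ⟨WithLp.toLp 2 (Sum.elim x.ofLp 0), ?_⟩
      simp only [toLpLin_apply, fromCols_mulVec_sumElim, mulVec_zero, add_zero]
    · refine ⟨WithLp.toLp 2 (Sum.elim 0 x.ofLp), ?_⟩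
      simp only [toLpLin_apply, fromCols_mulVec_sumElim, mulVec_zero, zero_add]

lemma eq_mul_transpose_mul_of_colSpaceE_le {A : Matrix (Fin n) q ℝ} {Q : Matrix (Fin n) q' ℝ}
    (hQ : Qᵀ * Q = 1) (h : colSpaceE A ≤ colSpaceE Q) : A = Q * (Qᵀ * A) := by
  apply toEuclideanLin.injective
  ext1 x
  obtain ⟨y, hy⟩ := h (LinearMap.mem_range_self _ x)
  rw [← Matrix.mul_assoc, toLpLin_mul (q := 2), LinearMap.comp_apply, ← hy,
    ← LinearMap.comp_apply (toEuclideanLin _), ← toLpLin_mul, Matrix.mul_assoc, hQ,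
    Matrix.mul_one]

lemma exists_fromCols_mul_of_le_colSpaceE {m r s : ℕ} (A : Matrix (Fin n) (Fin m) ℝ)
    {K : Submodule ℝ (EuclideanSpace ℝ (Fin n))} {M : Matrix (Fin n) (Fin r) ℝ}
    (hM : Mᵀ * M = 1) (hMK : colSpaceE M = K) (hKA : K ≤ colSpaceE A)
    (hr : finrank ℝ K = r) (hs : finrank ℝ (colSpaceE (projMat Kᗮ * A)) = s) :
    ∃ (R : Matrix (Fin n) (Fin s) ℝ) (Γ : Matrix (Fin r ⊕ Fin s) (Fin m) ℝ),
      Rᵀ * R = 1 ∧ colSpaceE R = colSpaceE (projMat Kᗮ * A) ∧ Γ.rank = min (r + s) m ∧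
      A = fromCols M R * Γ ∧ Mᵀ * R = 0 := by
  obtain ⟨R, hR, hRA⟩ := exists_transpose_mul_self_eq_one_and_colSpaceE_eq _ hs
  have hRK : colSpaceE R ≤ Kᗮ := by
    rw [hRA, colSpaceE_projMat_mul]
    exact K.map_starProjection_orthogonal_le _
  have hMR : Mᵀ * R = 0 := transpose_mul_eq_zero_of_colSpaceE_le_orthogonal (hMK ▸ hRK)
  have hQ : (fromCols M R)ᵀ * fromCols M R = 1 := fromCols_transpose_mul_fromCols_eq_one hM hR hMR
  have hAQ : colSpaceE A ≤ colSpaceE (fromCols M R) := by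
    rw [colSpaceE_fromCols, hMK, hRA, colSpaceE_projMat_mul]
    exact K.le_sup_map_starProjection_orthogonal _
  have hfactor := eq_mul_transpose_mul_of_colSpaceE_le hQ hAQ
  have hrankA : A.rank = r + s := by
    rw [rank_eq_finrank_colSpaceE,
      K.finrank_eq_finrank_add_finrank_map_starProjection_orthogonal hKA,
      ← colSpaceE_projMat_mul, hr, hs]
  have hrankΓ : ((fromCols M R)ᵀ * A).rank = A.rank :=
    le_antisymm (rank_mul_le_right _ _) ((congrArg rank hfactor).trans_le (rank_mul_le_right _ _))
  refine ⟨R, (fromCols M R)ᵀ * A, hR, hRA, ?_, hfactor, hMR⟩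
  rw [hrankΓ, hrankA, min_eq_left (hrankA ▸ A.rank_le_width)]

end Matrix

theorem joint_individual_decomposition_general {n p rM r₁ r₂ : ℕ}
    (P : Matrix (Fin n) (Fin n) ℝ) (W : Matrix (Fin n) (Fin p) ℝ)
    (MS : Submodule ℝ (EuclideanSpace ℝ (Fin n)))
    (R1S R2S : Submodule ℝ (EuclideanSpace ℝ (Fin n)))
    (hMS : MS = colSpaceE P ⊓ colSpaceE W)
    (hR1S : R1S = colSpaceE (projMat MSᗮ * P))
    (hR2S : R2S = colSpaceE (projMat MSᗮ * W))
    (hrM : Module.finrank ℝ MS = rM)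
    (hr₁ : Module.finrank ℝ R1S = r₁)
    (hr₂ : Module.finrank ℝ R2S = r₂) :
    ∃ (M : Matrix (Fin n) (Fin rM) ℝ)
      (R₁ : Matrix (Fin n) (Fin r₁) ℝ) (R₂ : Matrix (Fin n) (Fin r₂) ℝ)
      (Γ₁ : Matrix (Fin rM ⊕ Fin r₁) (Fin n) ℝ)
      (Γ₂ : Matrix (Fin rM ⊕ Fin r₂) (Fin p) ℝ),
      Mᵀ * M = 1 ∧ R₁ᵀ * R₁ = 1 ∧ R₂ᵀ * R₂ = 1 ∧
      colSpaceE M = MS ∧ colSpaceE R₁ = R1S ∧ colSpaceE R₂ = R2S ∧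
      Γ₁.rank = min (rM + r₁) n ∧ Γ₂.rank = min (rM + r₂) p ∧
      P = Matrix.fromCols M R₁ * Γ₁ ∧
      W = Matrix.fromCols M R₂ * Γ₂ ∧
      Mᵀ * R₁ = 0 ∧ Mᵀ * R₂ = 0 := by
  subst hR1S hR2S
  obtain ⟨M, hM, hMcol⟩ := exists_transpose_mul_self_eq_one_and_colSpaceE_eq MS hrM
  obtain ⟨R₁, Γ₁, hR₁, hR₁S, hΓ₁, hP, hMR₁⟩ :=
    exists_fromCols_mul_of_le_colSpaceE P hM hMcol (hMS ▸ inf_le_left) hrM hr₁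
  obtain ⟨R₂, Γ₂, hR₂, hR₂S, hΓ₂, hW, hMR₂⟩ :=
    exists_fromCols_mul_of_le_colSpaceE W hM hMcol (hMS ▸ inf_le_right) hrM hr₂
  exact ⟨M, R₁, R₂, Γ₁, Γ₂, hM, hR₁, hR₂, hMcol, hR₁S, hR₂S, hΓ₁, hΓ₂, hP, hW, hMR₁, hMR₂⟩

/-- Identifiability decomposition: with the joint subspace `M = C(P) ∩ C(W)` and individual
subspaces `R¹ = C(P_{M⊥}P)`, `R² = C(P_{M⊥}W)` all nonzero, with dimensions `r_M, r₁, r₂`,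
there exist matrices with orthonormal columns spanning them and full-rank matrices `Γ⁽ᵏ⁾`
with `P = (M R⁽¹⁾)Γ⁽¹⁾`, `W = (M R⁽²⁾)Γ⁽²⁾` and `MᵀR⁽ᵏ⁾ = 0`. -/
theorem joint_individual_decomposition {n p rM r₁ r₂ : ℕ}
    (P : Matrix (Fin n) (Fin n) ℝ) (W : Matrix (Fin n) (Fin p) ℝ)
    (MS : Submodule ℝ (EuclideanSpace ℝ (Fin n)))
    (R1S R2S : Submodule ℝ (EuclideanSpace ℝ (Fin n)))
    (hMS : MS = colSpaceE P ⊓ colSpaceE W)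
    (hR1S : R1S = colSpaceE (projMat MSᗮ * P))
    (hR2S : R2S = colSpaceE (projMat MSᗮ * W))
    (hMne : MS ≠ ⊥) (hR1ne : R1S ≠ ⊥) (hR2ne : R2S ≠ ⊥)
    (hrM : Module.finrank ℝ MS = rM)
    (hr₁ : Module.finrank ℝ R1S = r₁)
    (hr₂ : Module.finrank ℝ R2S = r₂) :
    ∃ (M : Matrix (Fin n) (Fin rM) ℝ)
      (R₁ : Matrix (Fin n) (Fin r₁) ℝ) (R₂ : Matrix (Fin n) (Fin r₂) ℝ)
      (Γ₁ : Matrix (Fin rM ⊕ Fin r₁) (Fin n) ℝ)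
      (Γ₂ : Matrix (Fin rM ⊕ Fin r₂) (Fin p) ℝ),
      Mᵀ * M = 1 ∧ R₁ᵀ * R₁ = 1 ∧ R₂ᵀ * R₂ = 1 ∧
      colSpaceE M = MS ∧ colSpaceE R₁ = R1S ∧ colSpaceE R₂ = R2S ∧
      Γ₁.rank = min (rM + r₁) n ∧ Γ₂.rank = min (rM + r₂) p ∧
      P = Matrix.fromCols M R₁ * Γ₁ ∧
      W = Matrix.fromCols M R₂ * Γ₂ ∧
      Mᵀ * R₁ = 0 ∧ Mᵀ * R₂ = 0 :=
  joint_individual_decomposition_general P W MS R1S R2S hMS hR1S hR2S hrM hr₁ hr₂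
end

section
/- Fix R⁽¹⁾ ∈ O_{n,r₁} and R⁽²⁾ ∈ O_{n,r₂}, data matrices A' ∈ ℝ^{n×n}, X ∈ ℝ^{n×p}, and rank r_M. Set Y = (P_{C(R⁽¹⁾)⊥}A' P_{C(R⁽²⁾)⊥}X) and R = (R⁽¹⁾ R⁽²⁾), and suppose rank(P_{C(R)⊥}Y) ≥ r_M. Then M̂, defined as the matrix of the r_M leading left singular vectors of P_{C(R)⊥}Y, is a global minimizer of the function f(M) = ‖A' − P_{C(M)}A' − P_{C(R⁽¹⁾)}A'‖_F² + ‖X − P_{C(M)}X − P_{C(R⁽²⁾)}X‖_F² over all M ∈ O_{n,r_M} with MᵀR⁽¹⁾ = 0 and MᵀR⁽²⁾ = 0. -/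
open Matrix

/-- The squared Frobenius norm of a real matrix. -/
noncomputable def frobSq {m q : Type*} [Fintype m] [Fintype q] (A : Matrix m q ℝ) : ℝ :=
  ∑ i, ∑ j, (A i j) ^ 2

/-- The `n × r` matrix whose columns are eigenvectors of the Hermitian matrix `A`
corresponding to its `r` largest eigenvalues (column `0` to the largest). -/
noncomputable def leadingEigvecs {N : ℕ} (A : Matrix (Fin N) (Fin N) ℝ)
    (hA : A.IsHermitian) (r : ℕ) (h : r ≤ N) : Matrix (Fin N) (Fin r) ℝ :=
  Matrix.of fun i j =>
    (hA.eigenvectorUnitary : Matrix (Fin N) (Fin N) ℝ) i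
      (Tuple.sort hA.eigenvalues (Fin.rev (Fin.castLE h j)))

/-! For `M` with orthonormal columns orthogonal to `R⁽¹⁾` and `R⁽²⁾`, the objective equals
`‖Y‖_F² - ‖MᵀY‖_F²`, and `MᵀY = MᵀZ` because the projection onto `C(R)` kills `M`.
Minimizing the objective thus means maximizing `tr (Mᵀ (Z Zᵀ) M)`, which by Ky Fan's
maximum principle is at most the sum of the `r_M` largest eigenvalues of `Z Zᵀ`, attained
at `M̂`. Finally `M̂` is feasible: as `rank Z ≥ r_M`, its columns are eigenvectors of `Z Zᵀ`
for nonzero eigenvalues, so they lie in the column space of `Z Zᵀ`, which is orthogonal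
to `C(R)`. -/

section Frobenius

variable {m k q : Type*} [Fintype m] [Fintype k] [Fintype q]

lemma frobSq_eq_trace_transpose_mul (A : Matrix m q ℝ) : frobSq A = trace (Aᵀ * A) := by
  simp only [frobSq, trace, diag, mul_apply, transpose_apply, sq]
  exact Finset.sum_comm

lemma frobSq_fromCols {q' : Type*} [Fintype q'] (B : Matrix m q ℝ) (C : Matrix m q' ℝ) :
    frobSq (fromCols B C) = frobSq B + frobSq C := by
  simp [frobSq, Fintype.sum_sum_type, Finset.sum_add_distrib]

lemma frobSq_sub_mul_transpose_mul [DecidableEq k] {M : Matrix m k ℝ} (hM : Mᵀ * M = 1)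
    (W : Matrix m q ℝ) : frobSq (W - M * Mᵀ * W) = frobSq W - frobSq (Mᵀ * W) := by
  have hWW : (W - M * Mᵀ * W)ᵀ * (W - M * Mᵀ * W) = Wᵀ * W - (Mᵀ * W)ᵀ * (Mᵀ * W) := by
    simp only [transpose_sub, transpose_mul, transpose_transpose, Matrix.sub_mul, Matrix.mul_sub,
      Matrix.mul_assoc]
    rw [← Matrix.mul_assoc Mᵀ M, hM, Matrix.one_mul]
    abel
  rw [frobSq_eq_trace_transpose_mul, hWW, trace_sub, ← frobSq_eq_trace_transpose_mul,
    ← frobSq_eq_trace_transpose_mul]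

lemma frobSq_transpose_mul (M : Matrix m k ℝ) (W : Matrix m q ℝ) :
    frobSq (Mᵀ * W) = trace (Mᵀ * (W * Wᵀ) * M) := by
  rw [frobSq_eq_trace_transpose_mul, trace_mul_comm, transpose_mul, transpose_transpose]
  simp only [Matrix.mul_assoc]

end Frobenius

section Projection

variable {n : ℕ}

lemma toEuclideanLin_projMat (K : Submodule ℝ (EuclideanSpace ℝ (Fin n))) :
    toEuclideanLin (projMat K) = K.starProjection.toLinearMap :=
  LinearEquiv.apply_symm_apply _ _

lemma projMat_mulVec (K : Submodule ℝ (EuclideanSpace ℝ (Fin n))) (v : Fin n → ℝ) :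
    projMat K *ᵥ v = K.starProjection (WithLp.toLp 2 v) := by
  simpa [toLpLin_apply] using
    congrArg WithLp.ofLp (LinearMap.congr_fun (toEuclideanLin_projMat K) (WithLp.toLp 2 v))

lemma projMat_transpose (K : Submodule ℝ (EuclideanSpace ℝ (Fin n))) :
    (projMat K)ᵀ = projMat K := by
  apply toEuclideanLin.injective
  rw [← conjTranspose_eq_transpose_of_trivial, toEuclideanLin_conjTranspose_eq_adjoint,
    toEuclideanLin_projMat, K.starProjection_isSymmetric.adjoint_eq]

variable {q k : Type*} {K : Submodule ℝ (EuclideanSpace ℝ (Fin n))}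

lemma projMat_colSpaceE_mul_self [Fintype q] [DecidableEq q] (A : Matrix (Fin n) q ℝ) :
    projMat (colSpaceE A) * A = A := by
  refine ext_iff_mulVec.2 fun v => ?_
  have hv : WithLp.toLp 2 (A *ᵥ v) ∈ colSpaceE A := ⟨WithLp.toLp 2 v, by simp [toLpLin_apply]⟩
  rw [← mulVec_mulVec, projMat_mulVec, Submodule.starProjection_eq_self_iff.2 hv]

lemma projMat_colSpaceE_mul_eq_zero [Fintype q] [DecidableEq q] [Fintype k]
    {A : Matrix (Fin n) q ℝ} {M : Matrix (Fin n) k ℝ} (h : Mᵀ * A = 0) :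
    projMat (colSpaceE A) * M = 0 := by
  refine ext_iff_mulVec.2 fun v => ?_
  have hv : WithLp.toLp 2 (M *ᵥ v) ∈ (colSpaceE A)ᗮ := by
    rintro _ ⟨x, rfl⟩
    simp [toLpLin_apply, EuclideanSpace.inner_eq_star_dotProduct, dotProduct_mulVec,
      vecMul_mulVec, h]
  rw [← mulVec_mulVec, projMat_mulVec, (Submodule.starProjection_apply_eq_zero_iff _).2 hv]
  simp

lemma transpose_mul_one_sub_projMat_of_mul_eq {B : Matrix (Fin n) k ℝ}
    (h : projMat K * B = B) : Bᵀ * (1 - projMat K) = 0 := by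
  rw [Matrix.mul_sub, Matrix.mul_one, ← projMat_transpose, ← transpose_mul, h, sub_self]

lemma transpose_mul_one_sub_projMat_of_mul_eq_zero {M : Matrix (Fin n) k ℝ}
    (h : projMat K * M = 0) : Mᵀ * (1 - projMat K) = Mᵀ := by
  rw [Matrix.mul_sub, Matrix.mul_one, ← projMat_transpose, ← transpose_mul, h, transpose_zero,
    sub_zero]

end Projection

namespace Matrix.IsHermitian

variable {n : Type*} [Fintype n] [DecidableEq n] {A : Matrix n n ℝ} (hA : A.IsHermitian)

lemma eigenvectorUnitary_transpose_mul_self :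
    (hA.eigenvectorUnitary : Matrix n n ℝ)ᵀ * (hA.eigenvectorUnitary : Matrix n n ℝ) = 1 := by
  rw [← conjTranspose_eq_transpose_of_trivial, ← star_eq_conjTranspose]
  exact Unitary.coe_star_mul_self hA.eigenvectorUnitary

lemma eigenvectorUnitary_mul_transpose_self :
    (hA.eigenvectorUnitary : Matrix n n ℝ) * (hA.eigenvectorUnitary : Matrix n n ℝ)ᵀ = 1 := by
  rw [← conjTranspose_eq_transpose_of_trivial, ← star_eq_conjTranspose]
  exact Unitary.coe_mul_star_self hA.eigenvectorUnitary

lemma eq_eigenvectorUnitary_mul_diagonal_mul_transpose :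
    A = (hA.eigenvectorUnitary : Matrix n n ℝ) * diagonal hA.eigenvalues *
      (hA.eigenvectorUnitary : Matrix n n ℝ)ᵀ := by
  simpa [Unitary.conjStarAlgAut_apply, star_eq_conjTranspose] using hA.spectral_theorem

lemma mul_eigenvectorUnitary :
    A * hA.eigenvectorUnitary =
      (hA.eigenvectorUnitary : Matrix n n ℝ) * diagonal hA.eigenvalues := by
  calc A * hA.eigenvectorUnitary
      = (hA.eigenvectorUnitary : Matrix n n ℝ) * diagonal hA.eigenvalues *
          (hA.eigenvectorUnitary : Matrix n n ℝ)ᵀ * hA.eigenvectorUnitary :=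
        congrArg (· * _) hA.eq_eigenvectorUnitary_mul_diagonal_mul_transpose
    _ = _ := by rw [Matrix.mul_assoc, hA.eigenvectorUnitary_transpose_mul_self, Matrix.mul_one]

end Matrix.IsHermitian

open Finset in
lemma sum_mul_le_sum_of_forall_le {ι : Type*} [Fintype ι] [DecidableEq ι] {μ c : ι → ℝ}
    {T : Finset ι} (hc0 : ∀ i, 0 ≤ c i) (hc1 : ∀ i, c i ≤ 1) (hsum : ∑ i, c i = #T)
    (hT : ∀ i ∈ T, ∀ k ∉ T, μ k ≤ μ i) : ∑ i, μ i * c i ≤ ∑ i ∈ T, μ i := by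
  obtain ⟨t, htT, htTc⟩ : ∃ t, (∀ i ∈ T, t ≤ μ i) ∧ ∀ k ∉ T, μ k ≤ t := by
    rcases T.eq_empty_or_nonempty with rfl | hne
    · obtain ⟨t, ht⟩ := (Set.finite_range μ).bddAbove
      exact ⟨t, by simp, fun k _ => ht ⟨k, rfl⟩⟩
    · exact ⟨T.inf' hne μ, fun i hi => inf'_le μ hi,
        fun k hk => le_inf' hne μ fun i hi => hT i hi k hk⟩
  -- shifting every `μ i` by `t` is free because `∑ i, c i = #T`
  have hshift : ∑ i, μ i * c i - ∑ i ∈ T, μ i =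
      ∑ i, (μ i - t) * (c i - if i ∈ T then 1 else 0) := by
    simp only [sub_mul, mul_sub, sum_sub_distrib, mul_ite, mul_one, mul_zero, sum_ite_mem,
      univ_inter, ← mul_sum, hsum, sum_const, nsmul_eq_mul]
    ring
  have hterm : ∑ i, (μ i - t) * (c i - if i ∈ T then 1 else 0) ≤ 0 :=
    sum_nonpos fun i _ => by
      split_ifs with hi
      · exact mul_nonpos_of_nonneg_of_nonpos (sub_nonneg.2 (htT i hi)) (by linarith [hc1 i])
      · exact mul_nonpos_of_nonpos_of_nonneg (sub_nonpos.2 (htTc i hi)) (by linarith [hc0 i])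
  linarith

section Orthonormal

variable {m k : Type*} [Fintype k]

lemma mul_transpose_self_diag_nonneg (G : Matrix m k ℝ) (i : m) : 0 ≤ (G * Gᵀ) i i := by
  simpa [mul_apply] using Finset.sum_nonneg fun j _ => mul_self_nonneg (G i j)

lemma mul_transpose_self_diag_le_one [Fintype m] [DecidableEq k] {G : Matrix m k ℝ}
    (hG : Gᵀ * G = 1) (i : m) : (G * Gᵀ) i i ≤ 1 := by
  set H := G * Gᵀ
  have hHH : H * H = H := by
    rw [Matrix.mul_assoc, ← Matrix.mul_assoc Gᵀ, hG, Matrix.one_mul]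
  have hHt : Hᵀ = H := by rw [transpose_mul, transpose_transpose]
  have hsq : H i i = ∑ l, H i l ^ 2 := by
    conv_lhs => rw [← hHH]
    simp only [mul_apply, sq]
    exact Finset.sum_congr rfl fun l _ => by rw [← congrFun (congrFun hHt i) l, transpose_apply]
  have hle : H i i ^ 2 ≤ H i i :=
    hsq ▸ Finset.single_le_sum (fun l _ => sq_nonneg (H i l)) (Finset.mem_univ i)
  nlinarith [mul_transpose_self_diag_nonneg G i]

lemma trace_transpose_mul_diagonal_mul [Fintype m] [DecidableEq m] (G : Matrix m k ℝ)
    (μ : m → ℝ) :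
    trace (Gᵀ * diagonal μ * G) = ∑ i, μ i * (G * Gᵀ) i i := by
  rw [Matrix.mul_assoc, trace_mul_comm, Matrix.mul_assoc]
  simp [trace, diagonal_mul]

end Orthonormal

section LeadingEigvecs

variable {N : ℕ} {A : Matrix (Fin N) (Fin N) ℝ} (hA : A.IsHermitian) {r : ℕ} (h : r ≤ N)

noncomputable def leadingIndex (j : Fin r) : Fin N :=
  Tuple.sort hA.eigenvalues (Fin.rev (Fin.castLE h j))

lemma leadingEigvecs_eq_submatrix :
    leadingEigvecs A hA r h =
      (hA.eigenvectorUnitary : Matrix (Fin N) (Fin N) ℝ).submatrix id (leadingIndex hA h) :=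
  rfl

lemma leadingIndex_injective : Function.Injective (leadingIndex hA h) :=
  (Tuple.sort _).injective.comp (Fin.rev_injective.comp (Fin.castLE_injective h))

lemma antitone_eigenvalues_leadingIndex : Antitone (hA.eigenvalues ∘ leadingIndex hA h) :=
  fun _ _ hij => Tuple.monotone_sort _ (Fin.rev_le_rev.2 ((Fin.castLE_le_castLE_iff h).2 hij))

lemma eigenvalues_le_eigenvalues_leadingIndex {k : Fin N}
    (hk : k ∉ Set.range (leadingIndex hA h)) (j : Fin r) :
    hA.eigenvalues k ≤ hA.eigenvalues (leadingIndex hA h j) := by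
  set σ := Tuple.sort hA.eigenvalues
  obtain ⟨l, rfl⟩ := σ.surjective k
  have hl : l ≤ Fin.rev (Fin.castLE h j) := by
    by_contra! hlt
    refine hk ⟨⟨N - 1 - l, ?_⟩, ?_⟩
    · have := Fin.lt_def.1 hlt
      simp only [Fin.val_rev, Fin.val_castLE] at this
      omega
    · simp only [leadingIndex]
      congr 1
      ext
      simp only [Fin.val_rev, Fin.val_castLE]
      omega
  exact Tuple.monotone_sort hA.eigenvalues hl

lemma eigenvalues_leadingIndex_ne_zero (hpsd : A.PosSemidef) (hr : r ≤ A.rank) (j : Fin r) :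
    hA.eigenvalues (leadingIndex hA h j) ≠ 0 := by
  intro hzero
  have hsub : Finset.univ.filter (fun k => hA.eigenvalues k ≠ 0) ⊆
      (Finset.Iio j).image (leadingIndex hA h) := by
    intro k hk
    have hpos : 0 < hA.eigenvalues k :=
      (hpsd.eigenvalues_nonneg k).lt_of_ne' (Finset.mem_filter.1 hk).2
    obtain ⟨j', rfl⟩ : k ∈ Set.range (leadingIndex hA h) := by
      by_contra hk'
      linarith [eigenvalues_le_eigenvalues_leadingIndex hA h hk' j]
    refine Finset.mem_image_of_mem _ (Finset.mem_Iio.2 ?_)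
    by_contra! hjj
    have := antitone_eigenvalues_leadingIndex hA h hjj
    simp only [Function.comp_apply] at this
    linarith
  have hcard := (Finset.card_le_card hsub).trans Finset.card_image_le
  rw [hA.rank_eq_card_non_zero_eigs, Fintype.card_subtype] at hr
  rw [Fin.card_Iio] at hcard
  omega

lemma leadingEigvecs_transpose_mul_self :
    (leadingEigvecs A hA r h)ᵀ * leadingEigvecs A hA r h = 1 := by
  rw [leadingEigvecs_eq_submatrix, transpose_submatrix,
    ← submatrix_mul _ _ _ _ _ Function.bijective_id, hA.eigenvectorUnitary_transpose_mul_self,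
    submatrix_one _ (leadingIndex_injective hA h)]

lemma mul_leadingEigvecs :
    A * leadingEigvecs A hA r h =
      leadingEigvecs A hA r h * diagonal (hA.eigenvalues ∘ leadingIndex hA h) := by
  ext i j
  have hcol := congrFun (congrFun hA.mul_eigenvectorUnitary i) (leadingIndex hA h j)
  rw [mul_diagonal] at hcol ⊢
  simpa [leadingEigvecs_eq_submatrix, mul_apply] using hcol

lemma leadingEigvecs_transpose_mul_eq_zero (hpsd : A.PosSemidef) (hr : r ≤ A.rank)
    {s : Type*} [Fintype s] {B : Matrix (Fin N) s ℝ} (hB : Bᵀ * A = 0) :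
    (leadingEigvecs A hA r h)ᵀ * B = 0 := by
  have hBM :
      Bᵀ * leadingEigvecs A hA r h * diagonal (hA.eigenvalues ∘ leadingIndex hA h) = 0 := by
    rw [Matrix.mul_assoc, ← mul_leadingEigvecs, ← Matrix.mul_assoc, hB, Matrix.zero_mul]
  have hBM' : Bᵀ * leadingEigvecs A hA r h = 0 := by
    ext a j
    simpa [mul_diagonal, eigenvalues_leadingIndex_ne_zero hA h hpsd hr j] using
      congrFun (congrFun hBM a) j
  rw [← transpose_transpose (_ᵀ * B), transpose_mul, transpose_transpose, hBM', transpose_zero]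

open Finset in
theorem trace_transpose_mul_mul_le_leadingEigvecs {M : Matrix (Fin N) (Fin r) ℝ}
    (hM : Mᵀ * M = 1) :
    trace (Mᵀ * A * M) ≤ trace ((leadingEigvecs A hA r h)ᵀ * A * leadingEigvecs A hA r h) := by
  set U : Matrix (Fin N) (Fin N) ℝ := ↑hA.eigenvectorUnitary
  set G := Uᵀ * M
  have hG : Gᵀ * G = 1 := by
    rw [transpose_mul, transpose_transpose, Matrix.mul_assoc, ← Matrix.mul_assoc U,
      hA.eigenvectorUnitary_mul_transpose_self, Matrix.one_mul, hM]
  have hlhs : trace (Mᵀ * A * M) = ∑ i, hA.eigenvalues i * (G * Gᵀ) i i := by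
    rw [← trace_transpose_mul_diagonal_mul]
    conv_lhs => rw [hA.eq_eigenvectorUnitary_mul_diagonal_mul_transpose]
    simp only [G, transpose_mul, transpose_transpose, Matrix.mul_assoc]
    rfl
  have hrhs : trace ((leadingEigvecs A hA r h)ᵀ * A * leadingEigvecs A hA r h) =
      ∑ i ∈ univ.image (leadingIndex hA h), hA.eigenvalues i := by
    rw [Matrix.mul_assoc, mul_leadingEigvecs, ← Matrix.mul_assoc,
      leadingEigvecs_transpose_mul_self, Matrix.one_mul, trace_diagonal,
      sum_image fun _ _ _ _ hij => leadingIndex_injective hA h hij]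
    rfl
  rw [hlhs, hrhs]
  refine sum_mul_le_sum_of_forall_le (mul_transpose_self_diag_nonneg G)
    (mul_transpose_self_diag_le_one hG) ?_ ?_
  · change trace (G * Gᵀ) = _
    rw [card_image_of_injective _ (leadingIndex_injective hA h), card_univ, trace_mul_comm, hG,
      trace_one]
  · rintro _ hi k hk
    obtain ⟨j, -, rfl⟩ := mem_image.1 hi
    exact eigenvalues_le_eigenvalues_leadingIndex hA h (by simpa using hk) j

end LeadingEigvecs

section Objective

variable {m k : Type*} [Fintype m] [DecidableEq m] [Fintype k] [DecidableEq k]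

lemma frobSq_sub_sub_eq {s q : Type*} [Fintype s] [Fintype q] {M : Matrix m k ℝ}
    {R : Matrix m s ℝ} (hM : Mᵀ * M = 1) (hMR : Mᵀ * R = 0) (W : Matrix m q ℝ) :
    frobSq (W - M * Mᵀ * W - R * Rᵀ * W) =
      frobSq ((1 - R * Rᵀ) * W) - frobSq (Mᵀ * ((1 - R * Rᵀ) * W)) := by
  have hproj : M * Mᵀ * ((1 - R * Rᵀ) * W) = M * Mᵀ * W := by
    have hMRW : M * Mᵀ * (R * Rᵀ * W) = 0 := by
      rw [Matrix.mul_assoc M, Matrix.mul_assoc R, ← Matrix.mul_assoc Mᵀ, hMR, Matrix.zero_mul,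
        Matrix.mul_zero]
    rw [Matrix.sub_mul, Matrix.one_mul, Matrix.mul_sub, hMRW, sub_zero]
  rw [← frobSq_sub_mul_transpose_mul hM, hproj, Matrix.sub_mul, Matrix.one_mul]
  congr 1
  abel

lemma frobSq_sub_sub_add_frobSq_sub_sub {s₁ s₂ q₁ q₂ : Type*} [Fintype s₁] [Fintype s₂]
    [Fintype q₁] [Fintype q₂] {M : Matrix m k ℝ} {R₁ : Matrix m s₁ ℝ} {R₂ : Matrix m s₂ ℝ}
    (hM : Mᵀ * M = 1) (h₁ : Mᵀ * R₁ = 0) (h₂ : Mᵀ * R₂ = 0)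
    (A : Matrix m q₁ ℝ) (X : Matrix m q₂ ℝ) :
    frobSq (A - M * Mᵀ * A - R₁ * R₁ᵀ * A) + frobSq (X - M * Mᵀ * X - R₂ * R₂ᵀ * X) =
      frobSq (fromCols ((1 - R₁ * R₁ᵀ) * A) ((1 - R₂ * R₂ᵀ) * X)) -
        frobSq (Mᵀ * fromCols ((1 - R₁ * R₁ᵀ) * A) ((1 - R₂ * R₂ᵀ) * X)) := by
  rw [frobSq_sub_sub_eq hM h₁, frobSq_sub_sub_eq hM h₂, mul_fromCols, frobSq_fromCols,
    frobSq_fromCols]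
  ring

end Objective

theorem leading_singvecs_minimize_general {n p rM r₁ r₂ : ℕ} (hrMn : rM ≤ n)
    (R₁ : Matrix (Fin n) (Fin r₁) ℝ) (R₂ : Matrix (Fin n) (Fin r₂) ℝ)
    (A' : Matrix (Fin n) (Fin n) ℝ) (X : Matrix (Fin n) (Fin p) ℝ)
    (Y : Matrix (Fin n) (Fin n ⊕ Fin p) ℝ)
    (hY : Y = Matrix.fromCols ((1 - R₁ * R₁ᵀ) * A') ((1 - R₂ * R₂ᵀ) * X))
    (Z : Matrix (Fin n) (Fin n ⊕ Fin p) ℝ)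
    (hZ : Z = (1 - projMat (colSpaceE (Matrix.fromCols R₁ R₂))) * Y)
    (hrank : rM ≤ Z.rank)
    (Mh : Matrix (Fin n) (Fin rM) ℝ)
    (hMh : Mh = leadingEigvecs (Z * Zᵀ) (isHermitian_mul_conjTranspose_self Z) rM hrMn) :
    Mhᵀ * Mh = 1 ∧ Mhᵀ * R₁ = 0 ∧ Mhᵀ * R₂ = 0 ∧
    ∀ M : Matrix (Fin n) (Fin rM) ℝ, Mᵀ * M = 1 → Mᵀ * R₁ = 0 → Mᵀ * R₂ = 0 →
      frobSq (A' - Mh * Mhᵀ * A' - R₁ * R₁ᵀ * A') +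
          frobSq (X - Mh * Mhᵀ * X - R₂ * R₂ᵀ * X) ≤
        frobSq (A' - M * Mᵀ * A' - R₁ * R₁ᵀ * A') +
          frobSq (X - M * Mᵀ * X - R₂ * R₂ᵀ * X) := by
  set P := projMat (colSpaceE (fromCols R₁ R₂))
  obtain ⟨hPR₁, hPR₂⟩ : P * R₁ = R₁ ∧ P * R₂ = R₂ :=
    fromCols_inj (by rw [← mul_fromCols]; exact projMat_colSpaceE_mul_self _)
  have hRZ {s : ℕ} {R : Matrix (Fin n) (Fin s) ℝ} (hPR : P * R = R) : Rᵀ * (Z * Zᵀ) = 0 := by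
    rw [hZ, ← Matrix.mul_assoc, ← Matrix.mul_assoc, transpose_mul_one_sub_projMat_of_mul_eq hPR,
      Matrix.zero_mul, Matrix.zero_mul]
  have hMZ {M : Matrix (Fin n) (Fin rM) ℝ} (h₁ : Mᵀ * R₁ = 0) (h₂ : Mᵀ * R₂ = 0) :
      Mᵀ * Z = Mᵀ * Y := by
    have hMR : Mᵀ * fromCols R₁ R₂ = 0 := by rw [mul_fromCols, h₁, h₂, fromCols_zero]
    rw [hZ, ← Matrix.mul_assoc,
      transpose_mul_one_sub_projMat_of_mul_eq_zero (projMat_colSpaceE_mul_eq_zero hMR)]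
  have hpsd : (Z * Zᵀ).PosSemidef := posSemidef_self_mul_conjTranspose Z
  have hr : rM ≤ (Z * Zᵀ).rank := by rwa [rank_self_mul_transpose]
  have hMhMh : Mhᵀ * Mh = 1 := hMh ▸ leadingEigvecs_transpose_mul_self _ _
  have hMh₁ : Mhᵀ * R₁ = 0 :=
    hMh ▸ leadingEigvecs_transpose_mul_eq_zero _ _ hpsd hr (hRZ hPR₁)
  have hMh₂ : Mhᵀ * R₂ = 0 :=
    hMh ▸ leadingEigvecs_transpose_mul_eq_zero _ _ hpsd hr (hRZ hPR₂)
  refine ⟨hMhMh, hMh₁, hMh₂, fun M hM h₁ h₂ => ?_⟩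
  rw [frobSq_sub_sub_add_frobSq_sub_sub hMhMh hMh₁ hMh₂,
    frobSq_sub_sub_add_frobSq_sub_sub hM h₁ h₂, ← hY, ← hMZ h₁ h₂, ← hMZ hMh₁ hMh₂,
    frobSq_transpose_mul, frobSq_transpose_mul]
  gcongr
  exact hMh ▸ trace_transpose_mul_mul_le_leadingEigvecs _ _ hM

/-- Fixing `R⁽¹⁾, R⁽²⁾` with orthonormal columns, setting
`Y = (P_{C(R⁽¹⁾)⊥}A'  P_{C(R⁽²⁾)⊥}X)`, `R = (R⁽¹⁾ R⁽²⁾)`, and `Z = P_{C(R)⊥}Y` with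
`rank Z ≥ r_M`, the matrix `M̂` of the `r_M` leading left singular vectors of `Z`
(equivalently, the leading eigenvectors of `Z Zᵀ`) is a global minimizer of
`M ↦ ‖A' − P_{C(M)}A' − P_{C(R⁽¹⁾)}A'‖_F² + ‖X − P_{C(M)}X − P_{C(R⁽²⁾)}X‖_F²`
over all `M ∈ O_{n,r_M}` with `MᵀR⁽¹⁾ = 0` and `MᵀR⁽²⁾ = 0`. -/
theorem leading_singvecs_minimize {n p rM r₁ r₂ : ℕ} (hrMn : rM ≤ n)
    (R₁ : Matrix (Fin n) (Fin r₁) ℝ) (R₂ : Matrix (Fin n) (Fin r₂) ℝ)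
    (hR₁ : R₁ᵀ * R₁ = 1) (hR₂ : R₂ᵀ * R₂ = 1)
    (A' : Matrix (Fin n) (Fin n) ℝ) (X : Matrix (Fin n) (Fin p) ℝ)
    (Y : Matrix (Fin n) (Fin n ⊕ Fin p) ℝ)
    (hY : Y = Matrix.fromCols ((1 - R₁ * R₁ᵀ) * A') ((1 - R₂ * R₂ᵀ) * X))
    (Z : Matrix (Fin n) (Fin n ⊕ Fin p) ℝ)
    (hZ : Z = (1 - projMat (colSpaceE (Matrix.fromCols R₁ R₂))) * Y)
    (hrank : rM ≤ Z.rank)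
    (Mh : Matrix (Fin n) (Fin rM) ℝ)
    (hMh : Mh = leadingEigvecs (Z * Zᵀ) (isHermitian_mul_conjTranspose_self Z) rM hrMn) :
    Mhᵀ * Mh = 1 ∧ Mhᵀ * R₁ = 0 ∧ Mhᵀ * R₂ = 0 ∧
    ∀ M : Matrix (Fin n) (Fin rM) ℝ, Mᵀ * M = 1 → Mᵀ * R₁ = 0 → Mᵀ * R₂ = 0 →
      frobSq (A' - Mh * Mhᵀ * A' - R₁ * R₁ᵀ * A') +
          frobSq (X - Mh * Mhᵀ * X - R₂ * R₂ᵀ * X) ≤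
        frobSq (A' - M * Mᵀ * A' - R₁ * R₁ᵀ * A') +
          frobSq (X - M * Mᵀ * X - R₂ * R₂ᵀ * X) :=
  leading_singvecs_minimize_general hrMn R₁ R₂ A' X Y hY Z hZ hrank Mh hMh
end
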